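/- Let d ≥ 2 and let H = F_2[T, X_2, …, X_d]/(T², X_i² − T·X_i : 2 ≤ i ≤ d), with H_1 the F_2-span of the images t, α_2, …, α_d of the variables. Then H is universally Koszul: for every ideal I of H generated by a subset of H_1 and every x ∈ H_1 with x ∉ I, the colon ideal I : x = { h ∈ H : h·x ∈ I } is again generated by a subset of H_1. -/

import Mathlib

open MvPolynomial

/-- The colon ideal `I : x = {a | a * x ∈ I}`. -/
def colonIdeal {A : Type*} [Ring A] (I : Ideal A) (x : A) : Ideal A :=
  Submodule.comap (LinearMap.toSpanSingleton A A x) I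

/-- The defining relations `T², X_i² − T·X_i` (with `T = X 0`) of the cohomology of a
2-rigid field of level 2. -/
noncomputable def rgRel (d : ℕ) [NeZero d] : Ideal (MvPolynomial (Fin d) (ZMod 2)) :=
  Ideal.span {p | p = X 0 ^ 2 ∨ ∃ i : Fin d, i ≠ 0 ∧ p = X i ^ 2 - X 0 * X i}

/-- The algebra `H = F₂[T, X₂, …, X_d]/(T², X_i² − T·X_i)`. -/
abbrev RGH (d : ℕ) [NeZero d] := MvPolynomial (Fin d) (ZMod 2) ⧸ rgRel d

/-- The images `t = gen d 0`, `α_i = gen d i` of the variables in `H`. -/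
noncomputable def gen (d : ℕ) [NeZero d] (i : Fin d) : RGH d :=
  Ideal.Quotient.mk (rgRel d) (X i)

/-- The degree-one component `H_1`, the `F₂`-span of `{t, α₂, …, α_d}`. -/
noncomputable def H1 (d : ℕ) [NeZero d] : Submodule (ZMod 2) (RGH d) :=
  Submodule.span (ZMod 2) (Set.range (gen d))


set_option linter.unusedSectionVars false
noncomputable section UK

variable {d : ℕ} [NeZero d]

abbrev Pd (d : ℕ) := MvPolynomial (Fin d) (ZMod 2)
abbrev Wd (d : ℕ) := Finset (Fin d) →₀ ZMod 2

/-- t-count of an exponent vector. -/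
def Tc (e : Fin d →₀ ℕ) : ℕ := e 0 + ∑ i ∈ e.support.erase 0, (e i - 1)

def Sfn (e : Fin d →₀ ℕ) : Finset (Fin d) :=
  if Tc e = 1 then insert 0 (e.support.erase 0) else e.support.erase 0

def Bm (e : Fin d →₀ ℕ) : Wd d := if Tc e ≤ 1 then Finsupp.single (Sfn e) 1 else 0

def NF (p : Pd d) : Wd d := ∑ e ∈ p.support, coeff e p • Bm e

lemma NF_superset {p : Pd d} {A : Finset (Fin d →₀ ℕ)} (hA : p.support ⊆ A) :
    NF p = ∑ e ∈ A, coeff e p • Bm e := by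
  refine Finset.sum_subset hA ?_
  intro e _ he
  rw [MvPolynomial.notMem_support_iff.mp he, zero_smul]

lemma NF_add (p q : Pd d) : NF (p + q) = NF p + NF q := by
  rw [NF_superset (A := p.support ∪ q.support ∪ (p+q).support) (by intro x hx; simp [hx]),
    NF_superset (p := p) (A := p.support ∪ q.support ∪ (p+q).support) (by intro x hx; simp [hx]),
    NF_superset (p := q) (A := p.support ∪ q.support ∪ (p+q).support) (by intro x hx; simp [hx]),
    ← Finset.sum_add_distrib]
  refine Finset.sum_congr rfl fun e _ => ?_
  rw [coeff_add, add_smul]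

lemma NF_sub (p q : Pd d) : NF (p - q) = NF p - NF q := by
  rw [NF_superset (A := p.support ∪ q.support ∪ (p-q).support) (by intro x hx; simp [hx]),
    NF_superset (p := p) (A := p.support ∪ q.support ∪ (p-q).support) (by intro x hx; simp [hx]),
    NF_superset (p := q) (A := p.support ∪ q.support ∪ (p-q).support) (by intro x hx; simp [hx]),
    ← Finset.sum_sub_distrib]
  refine Finset.sum_congr rfl fun e _ => ?_
  rw [coeff_sub, sub_smul]

lemma NF_monomial (e : Fin d →₀ ℕ) (c : ZMod 2) : NF (monomial e c) = c • Bm e := by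
  by_cases hc : c = 0
  · simp [hc, NF]
  · rw [NF, support_monomial, if_neg hc, Finset.sum_singleton, coeff_monomial, if_pos rfl]

lemma NF_zero : NF (0 : Pd d) = 0 := by simp [NF]

lemma NF_sum {β : Type*} (A : Finset β) (f : β → Pd d) :
    NF (∑ x ∈ A, f x) = ∑ x ∈ A, NF (f x) := by
  classical
  induction A using Finset.induction_on with
  | empty => simp [NF_zero]
  | insert _ _ h ih => rw [Finset.sum_insert h, NF_add, ih, Finset.sum_insert h]


lemma erase0_support_add_single0 (e : Fin d →₀ ℕ) (k : ℕ) :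
    (e + Finsupp.single (0 : Fin d) k).support.erase 0 = e.support.erase 0 := by
  ext i
  simp only [Finset.mem_erase, Finsupp.mem_support_iff, Finsupp.add_apply, Finsupp.single_apply]
  constructor
  · rintro ⟨hi, h⟩; refine ⟨hi, ?_⟩; rwa [if_neg (fun h' => hi h'.symm), add_zero] at h
  · rintro ⟨hi, h⟩; refine ⟨hi, ?_⟩; rwa [if_neg (fun h' => hi h'.symm), add_zero]

lemma Tc_add0 (e : Fin d →₀ ℕ) (k : ℕ) :
    Tc (e + Finsupp.single (0 : Fin d) k) = Tc e + k := by
  unfold Tc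
  rw [erase0_support_add_single0]
  have h1 : (e + Finsupp.single (0 : Fin d) k) 0 = e 0 + k := by
    simp [Finsupp.add_apply, Finsupp.single_apply]
  have h2 : ∑ i ∈ e.support.erase 0, ((e + Finsupp.single (0:Fin d) k) i - 1)
      = ∑ i ∈ e.support.erase 0, (e i - 1) := by
    refine Finset.sum_congr rfl fun i hi => ?_
    have hi0 : i ≠ 0 := (Finset.mem_erase.mp hi).1
    have hne : (0:Fin d) ≠ i := fun h => hi0 h.symm
    simp [Finsupp.add_apply, Finsupp.single_apply, if_neg hne]
  rw [h1, h2]; omega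

lemma support_add_single_of_pos (e : Fin d →₀ ℕ) (i : Fin d) {k : ℕ} (hk : 0 < k) :
    (e + Finsupp.single i k).support = insert i e.support := by
  ext j
  simp only [Finsupp.mem_support_iff, Finsupp.add_apply, Finsupp.single_apply,
    Finset.mem_insert]
  by_cases hij : i = j
  · subst hij; simp; omega
  · simp [if_neg hij, Ne.symm hij]

lemma erase0_support_add_single (e : Fin d →₀ ℕ) {i : Fin d} (hi : i ≠ 0) {k : ℕ} (hk : 0 < k) :
    (e + Finsupp.single i k).support.erase 0 = insert i (e.support.erase 0) := by
  rw [support_add_single_of_pos e i hk]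
  ext j
  simp only [Finset.mem_erase, Finset.mem_insert]
  constructor
  · rintro ⟨hj, h | h⟩
    · exact Or.inl h
    · exact Or.inr ⟨hj, h⟩
  · rintro (h | ⟨hj, h⟩)
    · exact ⟨h ▸ hi, Or.inl h⟩
    · exact ⟨hj, Or.inr h⟩

lemma Tc_add_single (e : Fin d →₀ ℕ) {i : Fin d} (hi : i ≠ 0) {k : ℕ} (hk : 0 < k) :
    Tc (e + Finsupp.single i k) =
      e 0 + (e i + k - 1) + ∑ j ∈ (e.support.erase 0).erase i, (e j - 1) := by
  unfold Tc
  rw [erase0_support_add_single e hi hk]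
  have h0 : (e + Finsupp.single i k) 0 = e 0 := by
    simp [Finsupp.add_apply, Finsupp.single_apply, if_neg hi]
  have hins : insert i (e.support.erase 0) = insert i ((e.support.erase 0).erase i) := by
    ext j
    simp only [Finset.mem_insert, Finset.mem_erase]
    tauto
  rw [h0, hins, Finset.sum_insert (Finset.notMem_erase _ _)]
  have hii : (e + Finsupp.single i k) i = e i + k := by
    simp [Finsupp.add_apply, Finsupp.single_apply]
  have h2 : ∑ j ∈ (e.support.erase 0).erase i, ((e + Finsupp.single i k) j - 1)
      = ∑ j ∈ (e.support.erase 0).erase i, (e j - 1) := by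
    refine Finset.sum_congr rfl fun j hj => ?_
    have hji : j ≠ i := (Finset.mem_erase.mp hj).1
    have hne : i ≠ j := fun h => hji h.symm
    simp [Finsupp.add_apply, Finsupp.single_apply, if_neg hne]
  rw [hii, h2]; omega

lemma Bm_add0_two (e : Fin d →₀ ℕ) : Bm (e + Finsupp.single (0 : Fin d) 2) = (0 : Wd d) := by
  unfold Bm
  rw [if_neg]
  rw [Tc_add0]; omega

lemma Bm_rel (e : Fin d →₀ ℕ) {i : Fin d} (hi : i ≠ 0) :
    Bm (e + Finsupp.single i 2) =
      Bm (e + Finsupp.single (0 : Fin d) 1 + Finsupp.single i 1) := by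
  have key : e + Finsupp.single (0:Fin d) 1 + Finsupp.single i 1
      = (e + Finsupp.single i 1) + Finsupp.single (0:Fin d) 1 := by
    abel
  have hT : Tc (e + Finsupp.single i 2) =
      Tc (e + Finsupp.single (0:Fin d) 1 + Finsupp.single i 1) := by
    rw [key, Tc_add0, Tc_add_single e hi (by norm_num), Tc_add_single e hi (by norm_num)]
    omega
  have hS : (e + Finsupp.single i 2).support.erase 0 =
      (e + Finsupp.single (0:Fin d) 1 + Finsupp.single i 1).support.erase 0 := by
    rw [key, erase0_support_add_single0, erase0_support_add_single e hi (by norm_num),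
      erase0_support_add_single e hi (by norm_num)]
  unfold Bm Sfn
  rw [hT, hS]

def Sq (e : Fin d →₀ ℕ) : Prop := ∀ i, e i ≤ 1

lemma Tc_sq {e : Fin d →₀ ℕ} (he : Sq e) : Tc e = e 0 := by
  unfold Tc
  rw [Finset.sum_eq_zero (fun i _ => by have := he i; omega), add_zero]

lemma Bm_sq {e : Fin d →₀ ℕ} (he : Sq e) : Bm e = Finsupp.single e.support 1 := by
  unfold Bm Sfn
  have h0 := he 0
  rw [Tc_sq he]
  interval_cases h : e 0
  · have : (0:Fin d) ∉ e.support := by simp [Finsupp.mem_support_iff, h]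
    rw [if_pos (by omega), if_neg (by omega), Finset.erase_eq_of_notMem this]
  · have : (0:Fin d) ∈ e.support := by simp [Finsupp.mem_support_iff, h]
    rw [if_pos (by omega), if_pos rfl, Finset.insert_erase this]

lemma Bm_mul1 {e : Fin d →₀ ℕ} (he : Sq e) {j : Fin d} (hj : j ∉ e.support) :
    Bm (e + Finsupp.single j 1) = Finsupp.single (insert j e.support) 1 := by
  have hej : e j = 0 := Finsupp.notMem_support_iff.mp hj
  have hsq : Sq (e + Finsupp.single j 1) := by
    intro i
    simp only [Finsupp.add_apply, Finsupp.single_apply]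
    by_cases hij : j = i
    · subst hij; simp [hej]
    · simp [if_neg hij]; exact he i
  rw [Bm_sq hsq, support_add_single_of_pos e j (by norm_num)]

lemma Bm_mul2 {e : Fin d →₀ ℕ} (he : Sq e) {j : Fin d} (hj : j ∈ e.support)
    (h0 : (0:Fin d) ∉ e.support) :
    Bm (e + Finsupp.single j 1) = Finsupp.single (insert 0 e.support) 1 := by
  have hj0 : j ≠ 0 := fun h => h0 (h ▸ hj)
  have hej : e j = 1 := le_antisymm (he j) (Nat.one_le_iff_ne_zero.mpr (Finsupp.mem_support_iff.mp hj))
  have he0 : e 0 = 0 := Finsupp.notMem_support_iff.mp h0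
  have hT : Tc (e + Finsupp.single j 1) = 1 := by
    rw [Tc_add_single e hj0 (by norm_num), he0, hej,
      Finset.sum_eq_zero (fun i _ => by have := he i; omega)]
    omega
  have hsupp : (e + Finsupp.single j 1).support = e.support := by
    rw [support_add_single_of_pos e j (by norm_num), Finset.insert_eq_of_mem hj]
  unfold Bm Sfn
  rw [hT, if_pos (by omega), if_pos rfl, hsupp, Finset.erase_eq_of_notMem h0]

lemma Bm_mul3 {e : Fin d →₀ ℕ} (he : Sq e) {j : Fin d} (hj : j ∈ e.support)
    (h0 : (0:Fin d) ∈ e.support) :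
    Bm (e + Finsupp.single j 1) = 0 := by
  have hej : e j = 1 := le_antisymm (he j) (Nat.one_le_iff_ne_zero.mpr (Finsupp.mem_support_iff.mp hj))
  have he0 : e 0 = 1 := le_antisymm (he 0) (Nat.one_le_iff_ne_zero.mpr (Finsupp.mem_support_iff.mp h0))
  have hT : Tc (e + Finsupp.single j 1) = 2 := by
    by_cases hj0 : j = 0
    · subst hj0; rw [Tc_add0, Tc_sq he, he0]
    · rw [Tc_add_single e hj0 (by norm_num), he0, hej,
        Finset.sum_eq_zero (fun i _ => by have := he i; omega)]
      omega
  unfold Bm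
  rw [if_neg (by omega)]



/-! ### Part 3 : NF kills relations, squarefree reduction, Theta map -/

def gensSet (d : ℕ) [NeZero d] : Set (Pd d) :=
  {p | p = X 0 ^ 2 ∨ ∃ i : Fin d, i ≠ 0 ∧ p = X i ^ 2 - X 0 * X i}

def rgRel' (d : ℕ) [NeZero d] : Ideal (Pd d) := Ideal.span (gensSet d)

lemma X_as_monomial (j : Fin d) : (X j : Pd d) = monomial (Finsupp.single j 1) 1 := by
  have := X_pow_eq_monomial (n := j) (e := 1) (R := ZMod 2)
  simpa using this

lemma X0X_as_monomial (j : Fin d) :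
    (X 0 * X j : Pd d) = monomial (Finsupp.single (0:Fin d) 1 + Finsupp.single j 1) 1 := by
  rw [X_as_monomial, X_as_monomial, monomial_mul, one_mul]

lemma NF_mul_gen (a : Pd d) {g : Pd d} (hg : g ∈ gensSet d) : NF (a * g) = 0 := by
  induction a using MvPolynomial.induction_on' with
  | add p q hp hq => rw [add_mul, NF_add, hp, hq, add_zero]
  | monomial u c =>
    rcases hg with h | ⟨i, hi, h⟩
    · subst h
      rw [X_pow_eq_monomial, monomial_mul, mul_one, NF_monomial, Bm_add0_two, smul_zero]
    · subst h
      rw [mul_sub, X_pow_eq_monomial, X0X_as_monomial, monomial_mul, monomial_mul]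
      simp only [mul_one]
      rw [NF_sub, NF_monomial, NF_monomial]
      have h2 : u + Finsupp.single i 2 = u + Finsupp.single i 2 := rfl
      have h3 : u + (Finsupp.single (0:Fin d) 1 + Finsupp.single i 1)
          = u + Finsupp.single (0:Fin d) 1 + Finsupp.single i 1 := by abel
      rw [h3, Bm_rel u hi, sub_self]

lemma NF_rgRel {p : Pd d} (hp : p ∈ rgRel' d) : NF p = 0 := by
  have H : ∀ q ∈ rgRel' d, ∀ a : Pd d, NF (a * q) = 0 := by
    intro q hq
    refine Submodule.span_induction ?_ ?_ ?_ ?_ hq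
    · intro g hg a; exact NF_mul_gen a hg
    · intro a; rw [mul_zero, NF_zero]
    · intro x y _ _ hx hy a
      rw [mul_add, NF_add, hx, hy, add_zero]
    · intro r x _ hx a
      rw [smul_eq_mul, ← mul_assoc, hx]
  have := H p hp 1
  rwa [one_mul] at this

def SqP (p : Pd d) : Prop := ∀ e ∈ p.support, Sq e

lemma SqP_zero : SqP (0 : Pd d) := by intro e he; simp at he

lemma sf_monomial_red : ∀ (n : ℕ) (e : Fin d →₀ ℕ),
    (∑ i ∈ e.support.erase 0, e i) = n → ∀ c : ZMod 2,
    ∃ q : Pd d, SqP q ∧ (monomial e c : Pd d) - q ∈ rgRel' d := by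
  intro n
  induction n using Nat.strong_induction_on with
  | _ n IH =>
    intro e hn c
    by_cases h2 : ∃ i : Fin d, i ≠ 0 ∧ 2 ≤ e i
    · obtain ⟨i, hi0, hi2⟩ := h2
      set e2 := e - Finsupp.single i 2 with he2
      have hsum : e2 + Finsupp.single i 2 = e := by
        ext j
        simp only [Finsupp.add_apply, Finsupp.tsub_apply, Finsupp.single_apply, he2]
        by_cases hij : i = j
        · subst hij; simp; omega
        · simp [if_neg hij]
      set e' := e2 + Finsupp.single (0:Fin d) 1 + Finsupp.single i 1 with he'
      have key : (monomial e c : Pd d) - monomial e' c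
          = monomial e2 c * (X i ^ 2 - X 0 * X i) := by
        rw [mul_sub, X_pow_eq_monomial, X0X_as_monomial, monomial_mul, monomial_mul]
        simp only [mul_one]
        rw [hsum]
        congr 2
        rw [he']; abel
      -- measure of e'
      have hsupE : e.support.erase 0 = insert i (e2.support.erase 0) := by
        have : e = e2 + Finsupp.single i 2 := hsum.symm
        rw [this, erase0_support_add_single e2 hi0 (by norm_num)]
      have hm : (∑ j ∈ e'.support.erase 0, e' j) = n - 1 ∧ 1 ≤ n := by
        have hA : e'.support.erase 0 = insert i (e2.support.erase 0) := by
          have h1 : e' = (e2 + Finsupp.single i 1) + Finsupp.single (0:Fin d) 1 := by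
            rw [he']; abel
          rw [h1, erase0_support_add_single0, erase0_support_add_single e2 hi0 (by norm_num)]
        set B := (e2.support.erase 0).erase i with hB
        have hins : insert i (e2.support.erase 0) = insert i B := by
          ext j; simp only [Finset.mem_insert, hB, Finset.mem_erase]; tauto
        have hiB : i ∉ B := Finset.notMem_erase _ _
        have hval : ∀ j ∈ B, e' j = e j := by
          intro j hj
          have hji : i ≠ j := fun h => (Finset.mem_erase.mp hj).1 h.symm
          have hj0 : (0:Fin d) ≠ j := fun h =>
            (Finset.mem_erase.mp (Finset.mem_of_mem_erase hj)).1 h.symm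
          simp only [he', he2, Finsupp.add_apply, Finsupp.tsub_apply, Finsupp.single_apply,
            if_neg hji, if_neg hj0, add_zero]
          omega
        have hvi : e' i = e i - 1 := by
          have h0i : (0:Fin d) ≠ i := fun h => hi0 h.symm
          simp only [he', he2, Finsupp.add_apply, Finsupp.tsub_apply, Finsupp.single_apply,
            if_pos rfl, if_neg h0i, add_zero]
          simp only [if_true]
          omega
        have hsum1 : (∑ j ∈ e'.support.erase 0, e' j) = e' i + ∑ j ∈ B, e' j := by
          rw [hA, hins, Finset.sum_insert hiB]
        have hsum2 : n = e i + ∑ j ∈ B, e j := by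
          rw [← hn, hsupE, hins, Finset.sum_insert hiB]
        have hsB : (∑ j ∈ B, e' j) = ∑ j ∈ B, e j := Finset.sum_congr rfl hval
        constructor
        · rw [hsum1, hvi, hsB]; omega
        · omega
      obtain ⟨q, hq, hmem⟩ := IH (n-1) (by omega) e' hm.1 c
      refine ⟨q, hq, ?_⟩
      have : (monomial e c : Pd d) - q = ((monomial e c : Pd d) - monomial e' c)
          + ((monomial e' c : Pd d) - q) := by ring
      rw [this, key]
      refine Ideal.add_mem _ (Ideal.mul_mem_left _ _ ?_) hmem
      exact Ideal.subset_span (Or.inr ⟨i, hi0, rfl⟩)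
    · push_neg at h2
      by_cases h0 : 2 ≤ e 0
      · refine ⟨0, SqP_zero, ?_⟩
        have hsum : (e - Finsupp.single (0:Fin d) 2) + Finsupp.single (0:Fin d) 2 = e := by
          ext j
          simp only [Finsupp.add_apply, Finsupp.tsub_apply, Finsupp.single_apply]
          by_cases hij : (0:Fin d) = j
          · subst hij; simp; omega
          · simp [if_neg hij]
        have : (monomial e c : Pd d) - 0
            = monomial (e - Finsupp.single (0:Fin d) 2) c * (X 0 ^ 2) := by
          rw [sub_zero, X_pow_eq_monomial, monomial_mul, mul_one, hsum]
        rw [this]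
        exact Ideal.mul_mem_left _ _ (Ideal.subset_span (Or.inl rfl))
      · refine ⟨monomial e c, ?_, by rw [sub_self]; exact Ideal.zero_mem _⟩
        intro e' he'
        have : e' = e := by
          rcases Finset.mem_singleton.mp (Finset.mem_of_subset (support_monomial_subset) he') with h
          exact h
        subst this
        intro i
        by_cases hi : i = 0
        · subst hi; omega
        · have := h2 i hi; omega

lemma exists_sf (p : Pd d) : ∃ q : Pd d, SqP q ∧ p - q ∈ rgRel' d := by
  induction p using MvPolynomial.induction_on' with
  | monomial u c => exact sf_monomial_red _ u rfl c
  | add p q hp hq =>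
    obtain ⟨q1, hq1, hm1⟩ := hp
    obtain ⟨q2, hq2, hm2⟩ := hq
    refine ⟨q1 + q2, ?_, ?_⟩
    · intro e he
      rcases Finset.mem_union.mp (MvPolynomial.support_add he) with h | h
      · exact hq1 e h
      · exact hq2 e h
    · have : p + q - (q1 + q2) = (p - q1) + (q - q2) := by ring
      rw [this]
      exact Ideal.add_mem _ hm1 hm2

/-! ### indicator exponents and Theta -/

def indF (s : Finset (Fin d)) : Fin d →₀ ℕ := ∑ i ∈ s, Finsupp.single i 1

lemma indF_apply (s : Finset (Fin d)) (i : Fin d) : indF s i = if i ∈ s then 1 else 0 := by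
  rw [indF, Finset.sum_apply']
  rw [Finset.sum_congr rfl (fun j _ => Finsupp.single_apply)]
  simp [Finset.sum_ite_eq]

lemma indF_sq (s : Finset (Fin d)) : Sq (indF s) := by
  intro i; rw [indF_apply]; split <;> omega

lemma support_indF (s : Finset (Fin d)) : (indF s).support = s := by
  ext i; rw [Finsupp.mem_support_iff, indF_apply]; split <;> simp_all

lemma indF_of_sq {e : Fin d →₀ ℕ} (he : Sq e) : indF e.support = e := by
  ext i
  rw [indF_apply]
  by_cases hi : i ∈ e.support
  · rw [if_pos hi]
    have := Finsupp.mem_support_iff.mp hi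
    have := he i
    omega
  · rw [if_neg hi]
    have := Finsupp.notMem_support_iff.mp hi
    omega

lemma indF_insert {s : Finset (Fin d)} {j : Fin d} (hj : j ∉ s) :
    indF (insert j s) = indF s + Finsupp.single j 1 := by
  rw [indF, Finset.sum_insert hj, indF]; abel

def Th (w : Wd d) : Pd d := w.sum fun s c => monomial (indF s) c

lemma Th_single (s : Finset (Fin d)) (c : ZMod 2) :
    Th (Finsupp.single s c) = monomial (indF s) c := by
  rw [Th, Finsupp.sum_single_index]
  rw [map_zero]

lemma Th_add (w w' : Wd d) : Th (w + w') = Th w + Th w' := by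
  rw [Th, Finsupp.sum_add_index, Th, Th]
  · intro s _; rw [map_zero]
  · intro s _ b1 b2; rw [map_add]

lemma Th_zero : Th (0 : Wd d) = 0 := by simp [Th]

lemma Th_sum {β : Type*} (A : Finset β) (f : β → Wd d) :
    Th (∑ x ∈ A, f x) = ∑ x ∈ A, Th (f x) := by
  classical
  induction A using Finset.induction_on with
  | empty => simp [Th_zero]
  | insert _ _ h ih => rw [Finset.sum_insert h, Th_add, ih, Finset.sum_insert h]

lemma Th_NF {q : Pd d} (hq : SqP q) : Th (NF q) = q := by
  rw [NF]
  have h1 : ∀ e ∈ q.support, coeff e q • Bm e = Finsupp.single e.support (coeff e q) := by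
    intro e he
    rw [Bm_sq (hq e he), Finsupp.smul_single, smul_eq_mul, mul_one]
  rw [Finset.sum_congr rfl h1, Th_sum]
  rw [Finset.sum_congr rfl (fun e he => by rw [Th_single, indF_of_sq (hq e he)])]
  exact (as_sum q).symm


/-! ### Part 4 : coordinate formulas and colon computations at the polynomial level -/

def BX (j : Fin d) (s : Finset (Fin d)) : Wd d :=
  if j ∈ s then (if (0:Fin d) ∈ s then 0 else Finsupp.single (insert 0 s) 1)
  else Finsupp.single (insert j s) 1

lemma NF_mul_X {q : Pd d} (hq : SqP q) (j : Fin d) :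
    NF (q * X j) = ∑ e ∈ q.support, coeff e q • BX j e.support := by
  conv_lhs => rw [as_sum q]
  rw [Finset.sum_mul, NF_sum]
  refine Finset.sum_congr rfl fun e he => ?_
  rw [X_as_monomial, monomial_mul, mul_one, NF_monomial]
  congr 1
  have hsq := hq e he
  unfold BX
  by_cases hjs : j ∈ e.support
  · by_cases h0 : (0:Fin d) ∈ e.support
    · rw [if_pos hjs, if_pos h0, Bm_mul3 hsq hjs h0]
    · rw [if_pos hjs, if_neg h0, Bm_mul2 hsq hjs h0]
  · rw [if_neg hjs, Bm_mul1 hsq hjs]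

lemma NF_apply_sq {q : Pd d} (hq : SqP q) (s : Finset (Fin d)) :
    NF q s = coeff (indF s) q := by
  rw [NF, Finset.sum_apply']
  rw [Finset.sum_eq_single (indF s) ?_ ?_]
  · rw [Bm_sq (indF_sq s), support_indF, Finsupp.smul_apply, Finsupp.single_apply,
      if_pos rfl, smul_eq_mul, mul_one]
  · intro e he hne
    rw [Bm_sq (hq e he), Finsupp.smul_apply, Finsupp.single_apply, if_neg, smul_zero]
    intro hc
    exact hne (by rw [← indF_of_sq (hq e he), hc])
  · intro h
    rw [MvPolynomial.notMem_support_iff.mp h, zero_smul, Finsupp.zero_apply]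

lemma insert_inj_of_not_mem {s t : Finset (Fin d)} {a : Fin d} (hs : a ∉ s) (ht : a ∉ t)
    (h : insert a s = insert a t) : s = t := by
  rw [← Finset.erase_insert hs, ← Finset.erase_insert ht, h]

lemma coord1 {q : Pd d} (hq : SqP q) {j : Fin d} (hj : j ≠ 0) {s : Finset (Fin d)}
    (h0 : (0:Fin d) ∉ s) (hjs : j ∉ s) :
    NF (q * X j) (insert j s) = NF q s := by
  rw [NF_mul_X hq j, Finset.sum_apply']
  rw [Finset.sum_eq_single (indF s) ?_ ?_]
  · rw [support_indF, BX, if_neg hjs, Finsupp.smul_apply, Finsupp.single_apply, if_pos rfl,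
      smul_eq_mul, mul_one, NF_apply_sq hq]
  · intro e he hne
    rw [Finsupp.smul_apply]
    unfold BX
    by_cases hje : j ∈ e.support
    · by_cases h0e : (0:Fin d) ∈ e.support
      · rw [if_pos hje, if_pos h0e]; simp
      · rw [if_pos hje, if_neg h0e, Finsupp.single_apply, if_neg, smul_zero]
        intro hc
        have : (0:Fin d) ∈ insert j s := hc ▸ Finset.mem_insert_self 0 _
        rcases Finset.mem_insert.mp this with h | h
        · exact hj h.symm
        · exact h0 h
    · rw [if_neg hje, Finsupp.single_apply, if_neg, smul_zero]
      intro hc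
      have : e.support = s := insert_inj_of_not_mem hje hjs hc
      exact hne (by rw [← indF_of_sq (hq e he), this])
  · intro h
    rw [MvPolynomial.notMem_support_iff.mp h, zero_smul, Finsupp.zero_apply]

lemma sum_eq_two {β M : Type*} [AddCommMonoid M] [DecidableEq β] (A : Finset β) (f : β → M)
    (a b : β) (hab : a ≠ b) (h : ∀ x ∈ A, x ≠ a → x ≠ b → f x = 0)
    (ha : a ∉ A → f a = 0) (hb : b ∉ A → f b = 0) :
    ∑ x ∈ A, f x = f a + f b := by
  classical
  have hsub : ∑ x ∈ A, f x = ∑ x ∈ A ∪ {a, b}, f x := by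
    refine Finset.sum_subset Finset.subset_union_left ?_
    intro x hx hxa
    rcases Finset.mem_union.mp hx with h' | h'
    · exact absurd h' hxa
    · rcases Finset.mem_insert.mp h' with rfl | h''
      · exact ha hxa
      · have hxb := Finset.mem_singleton.mp h''
        subst hxb
        exact hb hxa
  rw [hsub]
  have haA : a ∈ A ∪ {a, b} := Finset.mem_union_right _ (Finset.mem_insert_self _ _)
  rw [← Finset.add_sum_erase _ f haA]
  have hbA : b ∈ (A ∪ {a, b}).erase a :=
    Finset.mem_erase.mpr ⟨Ne.symm hab, Finset.mem_union_right _ (by simp)⟩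
  rw [← Finset.add_sum_erase _ f hbA]
  have hz : ∑ x ∈ ((A ∪ {a, b}).erase a).erase b, f x = 0 := by
    refine Finset.sum_eq_zero fun x hx => ?_
    have hxb : x ≠ b := (Finset.mem_erase.mp hx).1
    have hxa : x ≠ a := (Finset.mem_erase.mp (Finset.mem_of_mem_erase hx)).1
    have hxA : x ∈ A ∪ {a, b} := Finset.mem_of_mem_erase (Finset.mem_of_mem_erase hx)
    rcases Finset.mem_union.mp hxA with h' | h'
    · exact h x h' hxa hxb
    · rcases Finset.mem_insert.mp h' with rfl | h''
      · exact absurd rfl hxa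
      · exact absurd (Finset.mem_singleton.mp h'') hxb
  rw [hz, add_zero]

lemma coord2 {q : Pd d} (hq : SqP q) {j : Fin d} (hj : j ≠ 0) {s : Finset (Fin d)}
    (h0 : (0:Fin d) ∈ s) (hjs : j ∉ s) :
    NF (q * X j) (insert j s) = NF q s + NF q (insert j (s.erase 0)) := by
  have h0e : (0:Fin d) ∉ s.erase 0 := Finset.notMem_erase _ _
  have hjse : j ∉ s.erase 0 := fun h => hjs (Finset.mem_of_mem_erase h)
  have h0s1 : (0:Fin d) ∉ insert j (s.erase 0) := by
    intro h
    rcases Finset.mem_insert.mp h with h' | h'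
    · exact hj h'.symm
    · exact h0e h'
  have hins : insert 0 (insert j (s.erase 0)) = insert j s := by
    rw [Finset.insert_comm, Finset.insert_erase h0]
  rw [NF_mul_X hq j, Finset.sum_apply']
  rw [sum_eq_two _ _ (indF s) (indF (insert j (s.erase 0))) ?_ ?_ ?_ ?_]
  · rw [support_indF, support_indF, BX, BX, if_neg hjs,
      if_pos (Finset.mem_insert_self j _), if_neg h0s1, hins,
      Finsupp.smul_apply, Finsupp.smul_apply, Finsupp.single_apply]
    simp [NF_apply_sq hq]
  · intro hc
    have := congrArg Finsupp.support hc
    rw [support_indF, support_indF] at this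
    exact hjs (this ▸ Finset.mem_insert_self j _)
  · intro e he hne1 hne2
    rw [Finsupp.smul_apply]
    unfold BX
    by_cases hje : j ∈ e.support
    · by_cases h0e' : (0:Fin d) ∈ e.support
      · rw [if_pos hje, if_pos h0e']; simp
      · rw [if_pos hje, if_neg h0e', Finsupp.single_apply, if_neg, smul_zero]
        intro hc
        have h1 : e.support = (insert j s).erase 0 := by
          rw [← hc, Finset.erase_insert h0e']
        have h2 : (insert j s).erase 0 = insert j (s.erase 0) :=
          Finset.erase_insert_of_ne (fun h => hj h)
        exact hne2 (by rw [← indF_of_sq (hq e he), h1, h2])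
    · rw [if_neg hje, Finsupp.single_apply, if_neg, smul_zero]
      intro hc
      have : e.support = s := insert_inj_of_not_mem hje hjs hc
      exact hne1 (by rw [← indF_of_sq (hq e he), this])
  · intro h
    rw [MvPolynomial.notMem_support_iff.mp h, zero_smul, Finsupp.zero_apply]
  · intro h
    rw [MvPolynomial.notMem_support_iff.mp h, zero_smul, Finsupp.zero_apply]

lemma coord0 {q : Pd d} (hq : SqP q) {s : Finset (Fin d)} (h0 : (0:Fin d) ∉ s) :
    NF (q * X 0) (insert 0 s) = NF q s := by
  rw [NF_mul_X hq 0, Finset.sum_apply']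
  rw [Finset.sum_eq_single (indF s) ?_ ?_]
  · rw [support_indF, BX, if_neg h0, Finsupp.smul_apply, Finsupp.single_apply, if_pos rfl,
      smul_eq_mul, mul_one, NF_apply_sq hq]
  · intro e he hne
    rw [Finsupp.smul_apply]
    unfold BX
    by_cases h0e : (0:Fin d) ∈ e.support
    · rw [if_pos h0e, if_pos h0e]; simp
    · rw [if_neg h0e, Finsupp.single_apply, if_neg, smul_zero]
      intro hc
      have : e.support = s := insert_inj_of_not_mem h0e h0 hc
      exact hne (by rw [← indF_of_sq (hq e he), this])
  · intro h
    rw [MvPolynomial.notMem_support_iff.mp h, zero_smul, Finsupp.zero_apply]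

lemma NF_X0_apply (g : Pd d) {u : Finset (Fin d)} (hu : (0:Fin d) ∉ u) :
    NF (X 0 * g) u = 0 := by
  conv_lhs => rw [as_sum g]
  rw [Finset.mul_sum, NF_sum, Finset.sum_apply']
  refine Finset.sum_eq_zero fun e he => ?_
  rw [X_as_monomial, monomial_mul, one_mul, add_comm, NF_monomial, Finsupp.smul_apply]
  unfold Bm
  split
  · next hT =>
    rw [Tc_add0] at hT
    unfold Sfn
    rw [Tc_add0, if_pos (by omega), Finsupp.single_apply, if_neg, smul_zero]
    intro hc
    exact hu (hc ▸ Finset.mem_insert_self 0 _)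
  · simp


/-! ### Part 4b : the combinatorial induction and the three colon computations -/

def Kid (d : ℕ) [NeZero d] (j : Fin d) : Ideal (Pd d) :=
  rgRel' d ⊔ Ideal.span {(X 0 + X j : Pd d)}

lemma X0Xj_mem {j : Fin d} : (X 0 * X j : Pd d) ∈ Kid d j := by
  have h1 : (X 0 * X j : Pd d) = X 0 * (X 0 + X j) - X 0 ^ 2 := by ring
  rw [h1]
  refine Submodule.sub_mem _ ?_ ?_
  · exact Ideal.mem_sup_right (Ideal.mul_mem_left _ _ (Ideal.subset_span rfl))
  · exact Ideal.mem_sup_left (Ideal.subset_span (Or.inl rfl))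

lemma Dterm_mem {j : Fin d} (hj : j ≠ 0) {s : Finset (Fin d)} (h0 : (0:Fin d) ∈ s)
    (hjs : j ∈ s) (c : ZMod 2) : (monomial (indF s) c : Pd d) ∈ Kid d j := by
  have hj0 : j ∈ s.erase 0 := Finset.mem_erase.mpr ⟨hj, hjs⟩
  have h1 : indF s = indF ((s.erase 0).erase j) + Finsupp.single j 1 + Finsupp.single (0:Fin d) 1 := by
    rw [← indF_insert (Finset.notMem_erase j _), Finset.insert_erase hj0,
      ← indF_insert (Finset.notMem_erase 0 _), Finset.insert_erase h0]
  have h2 : (monomial (indF s) c : Pd d)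
      = monomial (indF ((s.erase 0).erase j)) c * (X 0 * X j) := by
    rw [X0X_as_monomial, monomial_mul, mul_one, h1]
    congr 1
    abel
  rw [h2]
  exact Ideal.mul_mem_left _ _ X0Xj_mem

lemma pair_mem {j : Fin d} (hj : j ≠ 0) {s : Finset (Fin d)} (h0 : (0:Fin d) ∈ s)
    (hjs : j ∉ s) (c : ZMod 2) :
    (monomial (indF s) c + monomial (indF (insert j (s.erase 0))) c : Pd d) ∈ Kid d j := by
  have h0e : (0:Fin d) ∉ s.erase 0 := Finset.notMem_erase _ _
  have hje : j ∉ s.erase 0 := fun h => hjs (Finset.mem_of_mem_erase h)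
  have h1 : indF s = indF (s.erase 0) + Finsupp.single (0:Fin d) 1 := by
    rw [← indF_insert h0e, Finset.insert_erase h0]
  have h2 : indF (insert j (s.erase 0)) = indF (s.erase 0) + Finsupp.single j 1 :=
    indF_insert hje
  have key : (monomial (indF s) c + monomial (indF (insert j (s.erase 0))) c : Pd d)
      = monomial (indF (s.erase 0)) c * (X 0 + X j) := by
    rw [mul_add, X_as_monomial, X_as_monomial, monomial_mul, monomial_mul]
    simp only [mul_one]
    rw [h1, h2]
  rw [key]
  exact Ideal.mem_sup_right (Ideal.mul_mem_left _ _ (Ideal.subset_span rfl))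

def E1c (j : Fin d) (w : Wd d) : Prop := ∀ s : Finset (Fin d), (0:Fin d) ∉ s → j ∉ s → w s = 0
def E2c (j : Fin d) (w : Wd d) : Prop :=
  ∀ s : Finset (Fin d), (0:Fin d) ∈ s → j ∉ s → w s = w (insert j (s.erase 0))

/-- The key removal step: remove a pair `s₀, s₁ = insert j (s₀.erase 0)` from `w`. -/
lemma case_c {j : Fin d} (hj : j ≠ 0) (w : Wd d) {s₀ : Finset (Fin d)}
    (hs₀ : s₀ ∈ w.support) (h0 : (0:Fin d) ∈ s₀) (hjs : j ∉ s₀)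
    (hE1 : E1c j w) (hE2 : E2c j w) :
    ∃ w₂ : Wd d, w₂.support.card < w.support.card ∧ E1c j w₂ ∧ E2c j w₂ ∧
      Th w = Th w₂ + (monomial (indF s₀) (w s₀) + monomial (indF (insert j (s₀.erase 0))) (w s₀)) := by
  classical
  set s₁ := insert j (s₀.erase 0) with hs₁
  have hjs₁ : j ∈ s₁ := Finset.mem_insert_self _ _
  have hs01 : s₀ ≠ s₁ := fun h => hjs (h ▸ hjs₁)
  have h0s₁ : (0:Fin d) ∉ s₁ := by
    intro h
    rcases Finset.mem_insert.mp h with h' | h'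
    · exact hj h'.symm
    · exact Finset.notMem_erase _ _ h'
  have hval : w s₀ = w s₁ := hE2 s₀ h0 hjs
  refine ⟨Finsupp.erase s₁ (Finsupp.erase s₀ w), ?_, ?_, ?_, ?_⟩
  · calc (Finsupp.erase s₁ (Finsupp.erase s₀ w)).support.card
        ≤ (Finsupp.erase s₀ w).support.card := by
          rw [Finsupp.support_erase]
          exact Finset.card_erase_le
      _ < w.support.card := by
          rw [Finsupp.support_erase]
          exact Finset.card_erase_lt_of_mem hs₀
  · intro u hu0 hju
    have hu1 : u ≠ s₁ := fun h => hju (h ▸ hjs₁)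
    have hu0' : u ≠ s₀ := fun h => hu0 (h ▸ h0)
    rw [Finsupp.erase_ne hu1, Finsupp.erase_ne hu0']
    exact hE1 u hu0 hju
  · intro u hu0 hju
    have hu1 : u ≠ s₁ := fun h => hju (h ▸ hjs₁)
    have hjpu : j ∈ insert j (u.erase 0) := Finset.mem_insert_self _ _
    have hpus₀ : insert j (u.erase 0) ≠ s₀ := fun h => hjs (h ▸ hjpu)
    by_cases hus : u = s₀
    · subst hus
      rw [Finsupp.erase_ne hu1, Finsupp.erase_same, ← hs₁, Finsupp.erase_same]
    · have hpus₁ : insert j (u.erase 0) ≠ s₁ := by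
        intro h
        apply hus
        have h1 : u.erase 0 = s₀.erase 0 := by
          refine insert_inj_of_not_mem ?_ ?_ (hs₁ ▸ h)
          · exact fun hh => hju (Finset.mem_of_mem_erase hh)
          · exact fun hh => hjs (Finset.mem_of_mem_erase hh)
        rw [← Finset.insert_erase hu0, ← Finset.insert_erase h0, h1]
      rw [Finsupp.erase_ne hu1, Finsupp.erase_ne hus, Finsupp.erase_ne hpus₁,
        Finsupp.erase_ne hpus₀]
      exact hE2 u hu0 hju
  · have hd1 : Finsupp.erase s₀ w + Finsupp.single s₀ (w s₀) = w := Finsupp.erase_add_single _ _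
    have hd2 : Finsupp.erase s₁ (Finsupp.erase s₀ w)
        + Finsupp.single s₁ ((Finsupp.erase s₀ w) s₁) = Finsupp.erase s₀ w :=
      Finsupp.erase_add_single _ _
    have hv1 : (Finsupp.erase s₀ w) s₁ = w s₁ := Finsupp.erase_ne (Ne.symm hs01)
    have hstep : Th (Finsupp.erase s₀ w)
        = Th (Finsupp.erase s₁ (Finsupp.erase s₀ w)) + Th (Finsupp.single s₁ (w s₁)) := by
      rw [← hv1, ← Th_add, hd2]
    calc Th w = Th (Finsupp.erase s₀ w) + Th (Finsupp.single s₀ (w s₀)) := by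
          rw [← Th_add, hd1]
      _ = _ := by
          rw [hstep, Th_single, Th_single, ← hval]
          ring

lemma Th_mem_of_E {j : Fin d} (hj : j ≠ 0) :
    ∀ (n : ℕ) (w : Wd d), w.support.card = n → E1c j w → E2c j w → Th w ∈ Kid d j := by
  intro n
  induction n using Nat.strong_induction_on with
  | _ n IHn =>
    intro w hcard hE1 hE2
    rcases Finset.eq_empty_or_nonempty w.support with hemp | ⟨s, hs⟩
    · rw [Finsupp.support_eq_empty.mp hemp, Th_zero]
      exact zero_mem _
    · have hws : w s ≠ 0 := Finsupp.mem_support_iff.mp hs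
      by_cases h0 : (0:Fin d) ∈ s
      · by_cases hjs : j ∈ s
        · -- remove the single monomial s (which is divisible by X0 Xj)
          have hd1 : Finsupp.erase s w + Finsupp.single s (w s) = w := Finsupp.erase_add_single _ _
          have hTh : Th w = Th (Finsupp.erase s w) + monomial (indF s) (w s) := by
            rw [← Th_single s (w s), ← Th_add, hd1]
          have hE1' : E1c j (Finsupp.erase s w) := by
            intro u hu0 hju
            have hus : u ≠ s := fun h => hu0 (h ▸ h0)
            rw [Finsupp.erase_ne hus]; exact hE1 u hu0 hju
          have hE2' : E2c j (Finsupp.erase s w) := by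
            intro u hu0 hju
            have hus : u ≠ s := fun h => hju (h ▸ hjs)
            have hpus : insert j (u.erase 0) ≠ s := by
              intro h
              have : (0:Fin d) ∈ insert j (u.erase 0) := h ▸ h0
              rcases Finset.mem_insert.mp this with h' | h'
              · exact hj h'.symm
              · exact Finset.notMem_erase _ _ h'
            rw [Finsupp.erase_ne hus, Finsupp.erase_ne hpus]
            exact hE2 u hu0 hju
          have hlt : (Finsupp.erase s w).support.card < n := by
            rw [Finsupp.support_erase, ← hcard]
            exact Finset.card_erase_lt_of_mem hs
          rw [hTh]
          exact Submodule.add_mem _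
            (IHn _ hlt _ rfl hE1' hE2') (Dterm_mem hj h0 hjs (w s))
        · obtain ⟨w₂, hlt, hE1', hE2', hTh⟩ := case_c hj w hs h0 hjs hE1 hE2
          rw [hTh]
          refine Submodule.add_mem _ (IHn _ (hcard ▸ hlt) _ rfl hE1' hE2') ?_
          exact pair_mem hj h0 hjs (w s)
      · by_cases hjs : j ∈ s
        · -- switch to the partner s₀ = insert 0 (s.erase j)
          set s₀ := insert 0 (s.erase j) with hs₀def
          have h0s₀ : (0:Fin d) ∈ s₀ := Finset.mem_insert_self _ _
          have hjs₀ : j ∉ s₀ := by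
            intro h
            rcases Finset.mem_insert.mp h with h' | h'
            · exact hj h'
            · exact Finset.notMem_erase _ _ h'
          have hpart : insert j (s₀.erase 0) = s := by
            rw [hs₀def, Finset.erase_insert, Finset.insert_erase hjs]
            intro h
            exact h0 (Finset.mem_of_mem_erase h)
          have hvs₀ : w s₀ = w s := by
            have := hE2 s₀ h0s₀ hjs₀
            rwa [hpart] at this
          have hs₀mem : s₀ ∈ w.support := Finsupp.mem_support_iff.mpr (hvs₀ ▸ hws)
          obtain ⟨w₂, hlt, hE1', hE2', hTh⟩ := case_c hj w hs₀mem h0s₀ hjs₀ hE1 hE2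
          rw [hTh]
          refine Submodule.add_mem _ (IHn _ (hcard ▸ hlt) _ rfl hE1' hE2') ?_
          exact pair_mem hj h0s₀ hjs₀ (w s₀)
        · exact absurd (hE1 s h0 hjs) hws


/-! ### Part 4c : polynomial-level colon lemmas -/

lemma sf_of_colon {p : Pd d} {x : Pd d} {J : Ideal (Pd d)} (hJ : rgRel' d ≤ J)
    (hp : p * x ∈ J) : ∃ q : Pd d, SqP q ∧ p - q ∈ rgRel' d ∧ q * x ∈ J := by
  obtain ⟨q, hq, hpq⟩ := exists_sf p
  refine ⟨q, hq, hpq, ?_⟩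
  have : q * x = p * x - (p - q) * x := by ring
  rw [this]
  exact Submodule.sub_mem _ hp (Ideal.mul_mem_right _ _ (hJ hpq))

theorem stepA {j : Fin d} (hj : j ≠ 0) {p : Pd d} (hp : p * X j ∈ rgRel' d) :
    p ∈ rgRel' d ⊔ Ideal.span {(X 0 + X j : Pd d)} := by
  obtain ⟨q, hq, hpq, hqX⟩ := sf_of_colon le_rfl hp
  have hNF : NF (q * X j) = 0 := NF_rgRel hqX
  have hE1 : E1c j (NF q) := by
    intro s h0 hjs
    rw [← coord1 hq hj h0 hjs, hNF, Finsupp.zero_apply]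
  have hE2 : E2c j (NF q) := by
    intro s h0 hjs
    have h := coord2 hq hj h0 hjs
    rw [hNF, Finsupp.zero_apply] at h
    have h2 : NF q s = - NF q (insert j (s.erase 0)) := eq_neg_of_add_eq_zero_left h.symm
    rw [h2]
    exact CharTwo.neg_eq _
  have hqmem : q ∈ Kid d j := by
    rw [← Th_NF hq]
    exact Th_mem_of_E hj _ (NF q) rfl hE1 hE2
  have hdecomp : p = (p - q) + q := by ring
  rw [hdecomp]
  exact Submodule.add_mem _ (Ideal.mem_sup_left hpq) hqmem

theorem stepA0 {p : Pd d} (hp : p * X 0 ∈ rgRel' d) :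
    p ∈ rgRel' d ⊔ Ideal.span {(X 0 : Pd d)} := by
  obtain ⟨q, hq, hpq, hqX⟩ := sf_of_colon le_rfl hp
  have hNF : NF (q * X 0) = 0 := NF_rgRel hqX
  have hcoord : ∀ s : Finset (Fin d), (0:Fin d) ∉ s → NF q s = 0 := by
    intro s h0
    rw [← coord0 hq h0, hNF, Finsupp.zero_apply]
  have hqmem : q ∈ Ideal.span {(X 0 : Pd d)} := by
    rw [← Th_NF hq, Th, Finsupp.sum]
    refine Ideal.sum_mem _ fun s hs => ?_
    have h0s : (0:Fin d) ∈ s := by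
      by_contra h
      exact (Finsupp.mem_support_iff.mp hs) (hcoord s h)
    have hmon : (monomial (indF s) (NF q s) : Pd d)
        = monomial (indF (s.erase 0)) (NF q s) * X 0 := by
      rw [X_as_monomial, monomial_mul, mul_one, ← indF_insert (Finset.notMem_erase _ _),
        Finset.insert_erase h0s]
    rw [hmon]
    exact Ideal.mul_mem_left _ _ (Ideal.subset_span rfl)
  have hdecomp : p = (p - q) + q := by ring
  rw [hdecomp]
  exact Submodule.add_mem _ (Ideal.mem_sup_left hpq) (Ideal.mem_sup_right hqmem)

theorem stepB {j : Fin d} (hj : j ≠ 0) {p : Pd d}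
    (hp : p * X j ∈ rgRel' d ⊔ Ideal.span {(X 0 : Pd d)}) :
    p ∈ rgRel' d ⊔ Ideal.span {(X 0 : Pd d), (X j : Pd d)} := by
  obtain ⟨q, hq, hpq, hqX⟩ := sf_of_colon le_sup_left hp
  obtain ⟨r, hr, b, hb, hrb⟩ := Submodule.mem_sup.mp hqX
  obtain ⟨g, hg⟩ := Ideal.mem_span_singleton.mp hb
  have hNF : ∀ u : Finset (Fin d), (0:Fin d) ∉ u → NF (q * X j) u = 0 := by
    intro u hu
    rw [← hrb, hg, NF_add, Finsupp.add_apply, NF_rgRel hr, Finsupp.zero_apply,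
      NF_X0_apply g hu, zero_add]
  have hE1 : ∀ s : Finset (Fin d), (0:Fin d) ∉ s → j ∉ s → NF q s = 0 := by
    intro s h0 hjs
    have h0' : (0:Fin d) ∉ insert j s := by
      intro h
      rcases Finset.mem_insert.mp h with h' | h'
      · exact hj h'.symm
      · exact h0 h'
    rw [← coord1 hq hj h0 hjs, hNF _ h0']
  have hqmem : q ∈ Ideal.span {(X 0 : Pd d), (X j : Pd d)} := by
    rw [← Th_NF hq, Th, Finsupp.sum]
    refine Ideal.sum_mem _ fun s hs => ?_
    by_cases h0s : (0:Fin d) ∈ s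
    · have hmon : (monomial (indF s) (NF q s) : Pd d)
          = monomial (indF (s.erase 0)) (NF q s) * X 0 := by
        rw [X_as_monomial, monomial_mul, mul_one, ← indF_insert (Finset.notMem_erase _ _),
          Finset.insert_erase h0s]
      rw [hmon]
      exact Ideal.mul_mem_left _ _ (Ideal.subset_span (Set.mem_insert _ _))
    · have hjs : j ∈ s := by
        by_contra h
        exact (Finsupp.mem_support_iff.mp hs) (hE1 s h0s h)
      have hmon : (monomial (indF s) (NF q s) : Pd d)
          = monomial (indF (s.erase j)) (NF q s) * X j := by
        rw [X_as_monomial, monomial_mul, mul_one, ← indF_insert (Finset.notMem_erase _ _),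
          Finset.insert_erase hjs]
      rw [hmon]
      exact Ideal.mul_mem_left _ _
        (Ideal.subset_span (Set.mem_insert_of_mem _ rfl))
  have hdecomp : p = (p - q) + q := by ring
  rw [hdecomp]
  exact Submodule.add_mem _ (Ideal.mem_sup_left hpq) (Ideal.mem_sup_right hqmem)


/-! ### Part 5a : H-level lemmas -/

lemma rgRel'_eq (d : ℕ) [NeZero d] : rgRel' d = rgRel d := rfl

abbrev mkh (d : ℕ) [NeZero d] : Pd d →+* RGH d := Ideal.Quotient.mk (rgRel d)

lemma gen_eq (i : Fin d) : gen d i = mkh d (X i) := rfl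

lemma mk_mem_span_of (T : Set (Pd d)) {p : Pd d}
    (hp : p ∈ rgRel d ⊔ Ideal.span T) :
    mkh d p ∈ Ideal.span (mkh d '' T) := by
  have h1 : mkh d p ∈ Ideal.map (mkh d) (rgRel d ⊔ Ideal.span T) :=
    Ideal.mem_map_of_mem _ hp
  rwa [Ideal.map_sup, Ideal.map_quotient_self, bot_sup_eq, Ideal.map_span] at h1

lemma AH {j : Fin d} (hj : j ≠ 0) {h : RGH d} (hh : h * gen d j = 0) :
    h ∈ Ideal.span {gen d 0 + gen d j} := by
  obtain ⟨p, rfl⟩ := Ideal.Quotient.mk_surjective h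
  have h1 : p * X j ∈ rgRel d := by
    rw [← Ideal.Quotient.eq_zero_iff_mem, map_mul]
    exact hh
  have h2 : p ∈ rgRel d ⊔ Ideal.span {(X 0 + X j : Pd d)} :=
    stepA hj (show p * X j ∈ rgRel' d from h1)
  have h3 := mk_mem_span_of _ h2
  have h4 : mkh d (X 0 + X j) = gen d 0 + gen d j := by rw [map_add]; rfl
  rwa [Set.image_singleton, h4] at h3

lemma A0H {h : RGH d} (hh : h * gen d 0 = 0) : h ∈ Ideal.span {gen d 0} := by
  obtain ⟨p, rfl⟩ := Ideal.Quotient.mk_surjective h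
  have h1 : p * X 0 ∈ rgRel d := by
    rw [← Ideal.Quotient.eq_zero_iff_mem, map_mul]
    exact hh
  have h2 : p ∈ rgRel d ⊔ Ideal.span {(X 0 : Pd d)} :=
    stepA0 (show p * X 0 ∈ rgRel' d from h1)
  have h3 := mk_mem_span_of _ h2
  have h4 : mkh d (X 0) = gen d 0 := rfl
  rwa [Set.image_singleton, h4] at h3

lemma BH {j : Fin d} (hj : j ≠ 0) {h : RGH d} (hh : h * gen d j ∈ Ideal.span {gen d 0}) :
    h ∈ Ideal.span {gen d 0, gen d j} := by
  obtain ⟨p, rfl⟩ := Ideal.Quotient.mk_surjective h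
  obtain ⟨y, hy⟩ := Ideal.mem_span_singleton.mp hh
  obtain ⟨g, rfl⟩ := Ideal.Quotient.mk_surjective y
  have h1 : p * X j ∈ rgRel d ⊔ Ideal.span {(X 0 : Pd d)} := by
    have hz : mkh d (p * X j - X 0 * g) = 0 := by
      rw [map_sub, map_mul, map_mul]
      show (Ideal.Quotient.mk (rgRel d)) p * gen d j
        - gen d 0 * (Ideal.Quotient.mk (rgRel d)) g = 0
      rw [hy]; ring
    have hmem : p * X j - X 0 * g ∈ rgRel d := Ideal.Quotient.eq_zero_iff_mem.mp hz
    have : p * X j = (p * X j - X 0 * g) + X 0 * g := by ring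
    rw [this]
    exact Submodule.add_mem _ (Ideal.mem_sup_left hmem)
      (Ideal.mem_sup_right (Ideal.mul_mem_right _ _ (Ideal.subset_span rfl)))
  have h2 : p ∈ rgRel d ⊔ Ideal.span {(X 0 : Pd d), (X j : Pd d)} :=
    stepB hj (show p * X j ∈ rgRel' d ⊔ _ from h1)
  have h3 := mk_mem_span_of _ h2
  have h4 : mkh d (X 0) = gen d 0 := rfl
  have h5 : mkh d (X j) = gen d j := rfl
  rwa [Set.image_pair, h4, h5] at h3

/-! linear elements -/

def wlin (c : Fin d → ZMod 2) : Pd d := ∑ i, C (c i) * X i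

lemma lin_sq (c : Fin d → ZMod 2) : wlin c * wlin c - X 0 * wlin c ∈ rgRel d := by
  have hsq : wlin c * wlin c = ∑ i, C (c i) * (X i * X i) := by
    have h1 : wlin c * wlin c = (wlin c) ^ 2 := by ring
    rw [h1, wlin, sum_pow_char]
    refine Finset.sum_congr rfl fun i _ => ?_
    rw [mul_pow, ← map_pow, ZMod.pow_card]
    ring
  have hX0 : X 0 * wlin c = ∑ i, C (c i) * (X 0 * X i) := by
    rw [wlin, Finset.mul_sum]
    refine Finset.sum_congr rfl fun i _ => by ring
  rw [hsq, hX0, ← Finset.sum_sub_distrib]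
  refine Ideal.sum_mem _ fun i _ => ?_
  by_cases hi : i = 0
  · subst hi
    have : C (c 0) * (X 0 * X 0) - C (c 0) * (X 0 * X 0) = (0 : Pd d) := by ring
    rw [this]
    exact Ideal.zero_mem _
  · have : C (c i) * (X i * X i) - C (c i) * (X 0 * X i)
        = C (c i) * (X i ^ 2 - X 0 * X i) := by ring
    rw [this]
    exact Ideal.mul_mem_left _ _ (Ideal.subset_span (Or.inr ⟨i, hi, rfl⟩))

lemma algebraMap_mk (a : ZMod 2) : algebraMap (ZMod 2) (RGH d) a = mkh d (C a) := by
  rw [IsScalarTower.algebraMap_apply (ZMod 2) (Pd d) (RGH d), Ideal.Quotient.algebraMap_eq,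
    MvPolynomial.algebraMap_eq]

lemma smul_mk (a : ZMod 2) (p : Pd d) : a • mkh d p = mkh d (C a * p) := by
  rw [← MvPolynomial.smul_eq_C_mul]
  exact (Submodule.Quotient.mk_smul _ _ _).symm

lemma mk_wlin (c : Fin d → ZMod 2) : mkh d (wlin c) = ∑ i, c i • gen d i := by
  rw [wlin, map_sum]
  refine Finset.sum_congr rfl fun i _ => ?_
  rw [gen_eq, smul_mk]

lemma H1_rep {x : RGH d} (hx : x ∈ H1 d) : ∃ c : Fin d → ZMod 2, x = mkh d (wlin c) := by
  rw [H1, Submodule.mem_span_range_iff_exists_fun] at hx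
  obtain ⟨c, hc⟩ := hx
  exact ⟨c, by rw [mk_wlin, hc]⟩

lemma mk_wlin_mem (c : Fin d → ZMod 2) : mkh d (wlin c) ∈ H1 d := by
  rw [mk_wlin]
  exact Submodule.sum_mem _ fun i _ =>
    Submodule.smul_mem _ _ (Submodule.subset_span (Set.mem_range_self i))

lemma gen_mem_H1 (i : Fin d) : gen d i ∈ H1 d :=
  Submodule.subset_span (Set.mem_range_self i)

lemma sq_eq {x : RGH d} (hx : x ∈ H1 d) : x * x = gen d 0 * x := by
  obtain ⟨c, rfl⟩ := H1_rep hx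
  rw [← sub_eq_zero, gen_eq, ← map_mul, ← map_mul, ← map_sub,
    Ideal.Quotient.eq_zero_iff_mem]
  exact lin_sq c

lemma add_self_H (a : RGH d) : a + a = 0 := by
  have h2 : (2 : Pd d) = 0 := by
    have := CharP.cast_eq_zero (Pd d) 2
    exact_mod_cast this
  have h2' : (2 : RGH d) = 0 := by
    have : (2 : RGH d) = mkh d (2 : Pd d) := by rw [map_ofNat]
    rw [this, h2, map_zero]
  rw [← two_mul, h2', zero_mul]

/-! lifting algebra endomorphisms to the quotient -/

lemma map_rel_le (f : Pd d →ₐ[ZMod 2] Pd d)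
    (hf : ∀ g ∈ gensSet d, f g ∈ rgRel d) {p : Pd d} (hp : p ∈ rgRel d) :
    f p ∈ rgRel d := by
  have h1 : f p ∈ Ideal.map f (rgRel d) := Ideal.mem_map_of_mem _ hp
  have h2 : Ideal.map f (rgRel d) ≤ rgRel d := by
    rw [rgRel, Ideal.map_span, Ideal.span_le]
    rintro q ⟨g, hg, rfl⟩
    exact hf g hg
  exact h2 h1

def liftEndo (f : Pd d →ₐ[ZMod 2] Pd d) (hf : ∀ g ∈ gensSet d, f g ∈ rgRel d) :
    RGH d →+* RGH d :=
  Ideal.Quotient.lift (rgRel d) ((mkh d).comp f.toRingHom)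
    (fun a ha => by
      simp only [RingHom.comp_apply]
      rw [Ideal.Quotient.eq_zero_iff_mem]
      exact map_rel_le f hf ha)

lemma liftEndo_mk (f : Pd d →ₐ[ZMod 2] Pd d) (hf : ∀ g ∈ gensSet d, f g ∈ rgRel d)
    (p : Pd d) : liftEndo f hf (mkh d p) = mkh d (f p) :=
  Ideal.Quotient.lift_mk _ _ _

lemma liftEndo_smul (f : Pd d →ₐ[ZMod 2] Pd d) (hf : ∀ g ∈ gensSet d, f g ∈ rgRel d)
    (a : ZMod 2) (y : RGH d) : liftEndo f hf (a • y) = a • liftEndo f hf y := by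
  obtain ⟨p, rfl⟩ := Ideal.Quotient.mk_surjective y
  rw [smul_mk, liftEndo_mk, liftEndo_mk, map_mul]
  have hfC : f (C a) = C a := by
    have h := f.commutes a
    rwa [MvPolynomial.algebraMap_eq] at h
  rw [hfC, ← smul_mk]

lemma liftEndo_H1 (f : Pd d →ₐ[ZMod 2] Pd d) (hf : ∀ g ∈ gensSet d, f g ∈ rgRel d)
    (hgen : ∀ i, mkh d (f (X i)) ∈ H1 d) :
    ∀ y ∈ H1 d, liftEndo f hf y ∈ H1 d := by
  intro y hy
  refine Submodule.span_induction ?_ ?_ ?_ ?_ hy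
  · rintro z ⟨i, rfl⟩
    rw [gen_eq, liftEndo_mk]
    exact hgen i
  · rw [RingHom.map_zero]; exact Submodule.zero_mem _
  · intro a b _ _ ha hb
    rw [RingHom.map_add]; exact Submodule.add_mem _ ha hb
  · intro a z _ hz
    rw [liftEndo_smul]
    exact Submodule.smul_mem _ _ hz


/-! ### Part 5b : involutive endomorphisms and transport -/

lemma add_self_P (p : Pd d) : p + p = 0 := by
  have h2 : (2 : Pd d) = 0 := by
    have := CharP.cast_eq_zero (Pd d) 2
    exact_mod_cast this
  rw [← two_mul, h2, zero_mul]

lemma ahom_C {d' : ℕ} (f : Pd d →ₐ[ZMod 2] MvPolynomial (Fin d') (ZMod 2)) (a : ZMod 2) :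
    f (C a) = C a := by
  have h := f.commutes a
  rwa [MvPolynomial.algebraMap_eq, MvPolynomial.algebraMap_eq] at h

def tauP (c : Fin d → ZMod 2) (j : Fin d) : Pd d →ₐ[ZMod 2] Pd d :=
  aeval (fun i => if i = j then wlin c else X i)

lemma tauP_X (c : Fin d → ZMod 2) (j i : Fin d) :
    tauP c j (X i) = if i = j then wlin c else X i := aeval_X _ i

lemma tauP_wlin {c : Fin d → ZMod 2} {j : Fin d} (hcj : c j = 1) :
    tauP c j (wlin c) = X j := by
  have hmap : tauP c j (wlin c) = ∑ i, C (c i) * (if i = j then wlin c else X i) := by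
    conv_lhs => rw [wlin]
    rw [map_sum]
    refine Finset.sum_congr rfl fun i _ => ?_
    rw [map_mul, ahom_C, tauP_X]
  set Srest := ∑ i ∈ Finset.univ.erase j, C (c i) * X i with hSrest
  have h1 : tauP c j (wlin c) = wlin c + Srest := by
    rw [hmap, ← Finset.add_sum_erase _ _ (Finset.mem_univ j), if_pos rfl, hcj, map_one,
      one_mul]
    congr 1
    refine Finset.sum_congr rfl fun i hi => ?_
    rw [if_neg (Finset.mem_erase.mp hi).1]
  have h2 : wlin c = X j + Srest := by
    rw [wlin, ← Finset.add_sum_erase _ _ (Finset.mem_univ j), hcj, map_one, one_mul]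
  rw [h1, h2, add_assoc, add_self_P, add_zero]

lemma tauP_invol {c : Fin d → ZMod 2} {j : Fin d} (hcj : c j = 1) (p : Pd d) :
    tauP c j (tauP c j p) = p := by
  have hcomp : (tauP c j).comp (tauP c j) = AlgHom.id (ZMod 2) (Pd d) := by
    refine MvPolynomial.algHom_ext fun i => ?_
    rw [AlgHom.comp_apply, tauP_X, AlgHom.id_apply]
    by_cases hij : i = j
    · rw [if_pos hij, tauP_wlin hcj, hij]
    · rw [if_neg hij, tauP_X, if_neg hij]
  calc tauP c j (tauP c j p) = ((tauP c j).comp (tauP c j)) p := rfl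
    _ = p := by rw [hcomp]; rfl

lemma tauP_gens {c : Fin d → ZMod 2} {j : Fin d} (hj : j ≠ 0) :
    ∀ g ∈ gensSet d, tauP c j g ∈ rgRel d := by
  rintro g (rfl | ⟨i, hi, rfl⟩)
  · rw [map_pow, tauP_X, if_neg (show ¬ (0:Fin d) = j from fun h => hj h.symm)]
    exact Ideal.subset_span (Or.inl rfl)
  · rw [map_sub, map_pow, map_mul]
    simp only [tauP_X]
    rw [if_neg (show ¬ (0:Fin d) = j from fun h => hj h.symm)]
    by_cases hij : i = j
    · rw [if_pos hij]
      have h := lin_sq c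
      have hsq : wlin c ^ 2 = wlin c * wlin c := by ring
      rwa [← hsq] at h
    · rw [if_neg hij]
      exact Ideal.subset_span (Or.inr ⟨i, hi, rfl⟩)

/-- swap endomorphism -/
def swP (j l : Fin d) : Pd d →ₐ[ZMod 2] Pd d := rename (Equiv.swap j l)

lemma swP_X (j l i : Fin d) : swP j l (X i) = X (Equiv.swap j l i) := rename_X _ _

lemma swP_invol (j l : Fin d) (p : Pd d) : swP j l (swP j l p) = p := by
  rw [swP, rename_rename]
  have : (Equiv.swap j l) ∘ (Equiv.swap j l) = id := by
    funext x
    exact Equiv.swap_apply_self _ _ _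
  rw [this, rename_id, AlgHom.id_apply]

lemma swP_gens {j l : Fin d} (hj : j ≠ 0) (hl : l ≠ 0) :
    ∀ g ∈ gensSet d, swP j l g ∈ rgRel d := by
  have h0 : Equiv.swap j l 0 = 0 :=
    Equiv.swap_apply_of_ne_of_ne (fun h => hj h.symm) (fun h => hl h.symm)
  rintro g (rfl | ⟨i, hi, rfl⟩)
  · rw [map_pow, swP_X, h0]
    exact Ideal.subset_span (Or.inl rfl)
  · rw [map_sub, map_pow, map_mul]
    simp only [swP_X]
    rw [h0]
    have hne : Equiv.swap j l i ≠ 0 := by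
      intro h
      apply hi
      have := (Equiv.swap j l).injective (h.trans h0.symm)
      exact this
    exact Ideal.subset_span (Or.inr ⟨_, hne, rfl⟩)

/-! transport along an involutive lifted endomorphism -/

def L0 (d : ℕ) [NeZero d] (S : Set (RGH d)) (x : RGH d) : Set (RGH d) :=
  {y | y ∈ (H1 d : Set (RGH d)) ∧ x * y ∈ Ideal.span S}

lemma S_sub_L0 {S : Set (RGH d)} (hS : S ⊆ (H1 d : Set (RGH d))) (x : RGH d) :
    S ⊆ L0 d S x := fun y hy =>
  ⟨hS hy, Ideal.mul_mem_left _ _ (Ideal.subset_span hy)⟩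

def ClaimP (d : ℕ) [NeZero d] : Prop :=
  ∀ S : Set (RGH d), S ⊆ (H1 d : Set (RGH d)) → ∀ x ∈ H1 d, x ∉ Ideal.span S →
    ∀ h : RGH d, h * x ∈ Ideal.span S → h ∈ Ideal.span (L0 d S x)

section transport

variable (F : RGH d →+* RGH d)

lemma inj_memF (hinv : ∀ y, F (F y) = y) {J : Ideal (RGH d)} {z : RGH d}
    (hz : F z ∈ Ideal.map F J) : z ∈ J := by
  have hsurj : Function.Surjective F := fun y => ⟨F y, hinv y⟩
  obtain ⟨u, hu, hud⟩ := (Ideal.mem_map_iff_of_surjective F hsurj).mp hz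
  have : u = z := by
    have h1 := congrArg F hud
    rwa [hinv, hinv] at h1
  exact this ▸ hu

lemma transport_step (hinv : ∀ y, F (F y) = y) (hH1 : ∀ y ∈ H1 d, F y ∈ H1 d)
    {S : Set (RGH d)} (hS : S ⊆ (H1 d : Set (RGH d))) {x h : RGH d}
    (hgoal : F h ∈ Ideal.span (L0 d (F '' S) (F x))) :
    h ∈ Ideal.span (L0 d S x) := by
  have himg : ∀ y ∈ L0 d (F '' S) (F x), y ∈ F '' (L0 d S x) := by
    intro y hy
    obtain ⟨hyH1, hyx⟩ := hy
    refine ⟨F y, ⟨hH1 y hyH1, ?_⟩, hinv y⟩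
    have hxy : F (x * F y) ∈ Ideal.map F (Ideal.span S) := by
      rw [map_mul, hinv, Ideal.map_span]
      exact hyx
    exact inj_memF F hinv hxy
  have h1 : F h ∈ Ideal.span (F '' (L0 d S x)) :=
    Ideal.span_mono himg hgoal
  rw [← Ideal.map_span] at h1
  exact inj_memF F hinv h1

lemma transport_notmem (hinv : ∀ y, F (F y) = y) {S : Set (RGH d)} {x : RGH d}
    (hxI : x ∉ Ideal.span S) :
    F x ∉ Ideal.span (F '' S) := by
  intro hmem
  rw [← Ideal.map_span] at hmem
  exact hxI (inj_memF F hinv hmem)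

lemma transport_mul {S : Set (RGH d)} {x h : RGH d} (hhx : h * x ∈ Ideal.span S) :
    F h * F x ∈ Ideal.span (F '' S) := by
  rw [← Ideal.map_span, ← map_mul]
  exact Ideal.mem_map_of_mem _ hhx

end transport


/-! ### Part 5c : reduction to d-1 variables -/

lemma map_rel_le2 {d2 : ℕ} [NeZero d2] (f : Pd d →ₐ[ZMod 2] Pd d2)
    (hf : ∀ g ∈ gensSet d, f g ∈ rgRel d2) {p : Pd d} (hp : p ∈ rgRel d) :
    f p ∈ rgRel d2 := by
  have h1 : f p ∈ Ideal.map f (rgRel d) := Ideal.mem_map_of_mem _ hp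
  have h2 : Ideal.map f (rgRel d) ≤ rgRel d2 := by
    rw [rgRel, Ideal.map_span, Ideal.span_le]
    rintro q ⟨g, hg, rfl⟩
    exact hf g hg
  exact h2 h1

def lstF (d : ℕ) [NeZero d] : Fin d := ⟨d - 1, by have := NeZero.ne d; omega⟩

section quot

def pmap : Pd d →ₐ[ZMod 2] Pd (d - 1) :=
  aeval (fun i => if h : (i : ℕ) < d - 1 then X ⟨i, h⟩ else 0)

def imap : Pd (d - 1) →ₐ[ZMod 2] Pd d := rename (Fin.castLE (Nat.sub_le d 1))

lemma pmap_X (i : Fin d) :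
    pmap (X i) = if h : (i : ℕ) < d - 1 then X ⟨i, h⟩ else 0 := aeval_X _ i

lemma imap_X (k : Fin (d - 1)) :
    imap (X k : Pd (d - 1)) = X (Fin.castLE (Nat.sub_le d 1) k) := rename_X _ _

lemma pmap_imap (q : Pd (d - 1)) : pmap (imap q) = q := by
  have hcomp : (pmap (d := d)).comp imap = AlgHom.id (ZMod 2) (Pd (d - 1)) := by
    refine MvPolynomial.algHom_ext fun k => ?_
    rw [AlgHom.comp_apply, imap_X, pmap_X, AlgHom.id_apply]
    have hk : ((Fin.castLE (Nat.sub_le d 1) k : Fin d) : ℕ) < d - 1 := k.2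
    rw [dif_pos hk]
    congr 1
  calc pmap (imap q) = ((pmap (d := d)).comp imap) q := rfl
    _ = q := by rw [hcomp]; rfl

section withInstance
variable [NeZero (d - 1)]

lemma val0_lt (hd2 : 2 ≤ d) : ((0 : Fin d) : ℕ) < d - 1 := by
  rw [Fin.val_zero]; omega

lemma pmap_X0 (hd2 : 2 ≤ d) : pmap (X (0 : Fin d)) = X (0 : Fin (d - 1)) := by
  rw [pmap_X, dif_pos (val0_lt hd2)]
  exact congrArg X (Fin.ext (by simp))

lemma pmap_gens (hd2 : 2 ≤ d) : ∀ g ∈ gensSet d, pmap g ∈ rgRel (d - 1) := by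
  rintro g (rfl | ⟨i, hi, rfl⟩)
  · rw [map_pow, pmap_X0 hd2]
    exact Ideal.subset_span (Or.inl rfl)
  · rw [map_sub, map_pow, map_mul, pmap_X0 hd2, pmap_X]
    by_cases h : (i : ℕ) < d - 1
    · rw [dif_pos h]
      have hne : (⟨(i : ℕ), h⟩ : Fin (d - 1)) ≠ 0 := by
        intro hc
        apply hi
        have : (i : ℕ) = 0 := by
          have := congrArg Fin.val hc
          simpa using this
        exact Fin.ext (by simpa using this)
      exact Ideal.subset_span (Or.inr ⟨_, hne, rfl⟩)
    · rw [dif_neg h]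
      simp

lemma imap_gens (hd2 : 2 ≤ d) : ∀ g ∈ gensSet (d - 1), imap g ∈ rgRel d := by
  have h0 : imap (X (0 : Fin (d - 1))) = X (0 : Fin d) := by
    rw [imap_X]
    exact congrArg X (Fin.ext (by simp))
  rintro g (rfl | ⟨k, hk, rfl⟩)
  · rw [map_pow, h0]
    exact Ideal.subset_span (Or.inl rfl)
  · rw [map_sub, map_pow, map_mul, h0, imap_X]
    have hne : Fin.castLE (Nat.sub_le d 1) k ≠ 0 := by
      intro hc
      apply hk
      have := congrArg Fin.val hc
      exact Fin.ext (by simpa using this)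
    exact Ideal.subset_span (Or.inr ⟨_, hne, rfl⟩)

def pH (hd2 : 2 ≤ d) : RGH d →+* RGH (d - 1) :=
  Ideal.Quotient.lift (rgRel d) ((mkh (d - 1)).comp (pmap (d := d)).toRingHom)
    (fun a ha => by
      simp only [RingHom.comp_apply]
      rw [Ideal.Quotient.eq_zero_iff_mem]
      exact map_rel_le2 _ (pmap_gens hd2) ha)

def iH (hd2 : 2 ≤ d) : RGH (d - 1) →+* RGH d :=
  Ideal.Quotient.lift (rgRel (d - 1)) ((mkh d).comp (imap (d := d)).toRingHom)
    (fun a ha => by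
      simp only [RingHom.comp_apply]
      rw [Ideal.Quotient.eq_zero_iff_mem]
      exact map_rel_le2 _ (imap_gens hd2) ha)

lemma pH_mk (hd2 : 2 ≤ d) (p : Pd d) : pH hd2 (mkh d p) = mkh (d - 1) (pmap p) :=
  Ideal.Quotient.lift_mk _ _ _

lemma iH_mk (hd2 : 2 ≤ d) (q : Pd (d - 1)) : iH hd2 (mkh (d - 1) q) = mkh d (imap q) :=
  Ideal.Quotient.lift_mk _ _ _

lemma pH_iH (hd2 : 2 ≤ d) (y : RGH (d - 1)) : pH hd2 (iH hd2 y) = y := by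
  obtain ⟨q, rfl⟩ := Ideal.Quotient.mk_surjective y
  rw [iH_mk, pH_mk, pmap_imap]

lemma pH_surj (hd2 : 2 ≤ d) : Function.Surjective (pH hd2) :=
  fun y => ⟨iH hd2 y, pH_iH hd2 y⟩

lemma sub_imap_pmap (hd2 : 2 ≤ d) (p : Pd d) :
    p - imap (pmap p) ∈ Ideal.span {(X (lstF d) : Pd d)} := by
  induction p using MvPolynomial.induction_on with
  | C a =>
    rw [ahom_C, ahom_C, sub_self]
    exact Ideal.zero_mem _
  | add p q hp hq =>
    have : p + q - imap (pmap (p + q)) = (p - imap (pmap p)) + (q - imap (pmap q)) := by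
      rw [map_add, map_add]; ring
    rw [this]
    exact Submodule.add_mem _ hp hq
  | mul_X p i hp =>
    by_cases h : (i : ℕ) < d - 1
    · have hXi : imap (pmap (X i : Pd d)) = X i := by
        rw [pmap_X, dif_pos h, imap_X]
        exact congrArg X (Fin.ext (by simp))
      have : p * X i - imap (pmap (p * X i)) = (p - imap (pmap p)) * X i := by
        rw [map_mul, map_mul, hXi]; ring
      rw [this]
      exact Ideal.mul_mem_right _ _ hp
    · have hi : i = lstF d := by
        have h2 := i.2
        exact Fin.ext (by simp only [lstF]; omega)
      have hXi : pmap (X i : Pd d) = 0 := by rw [pmap_X, dif_neg h]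
      have : p * X i - imap (pmap (p * X i)) = p * X (lstF d) := by
        rw [map_mul, hXi, mul_zero, map_zero, sub_zero, hi]
      rw [this]
      exact Ideal.mul_mem_left _ _ (Ideal.subset_span rfl)

lemma pH_ker (hd2 : 2 ≤ d) {h : RGH d} (hh : pH hd2 h = 0) :
    h ∈ Ideal.span {gen d (lstF d)} := by
  obtain ⟨p, rfl⟩ := Ideal.Quotient.mk_surjective h
  rw [pH_mk] at hh
  have h1 : pmap p ∈ rgRel (d - 1) := Ideal.Quotient.eq_zero_iff_mem.mp hh
  have h2 : imap (pmap p) ∈ rgRel d := map_rel_le2 _ (imap_gens hd2) h1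
  have h3 : mkh d p = mkh d (p - imap (pmap p)) := by
    rw [map_sub, Ideal.Quotient.eq_zero_iff_mem.mpr h2, sub_zero]
  rw [h3]
  obtain ⟨u, hu⟩ := Ideal.mem_span_singleton.mp (sub_imap_pmap hd2 p)
  rw [hu, map_mul]
  exact Ideal.mul_mem_right _ _ (Ideal.subset_span rfl)

lemma pH_smul (hd2 : 2 ≤ d) (a : ZMod 2) (y : RGH d) :
    pH hd2 (a • y) = a • pH hd2 y := by
  obtain ⟨p, rfl⟩ := Ideal.Quotient.mk_surjective y
  rw [smul_mk, pH_mk, pH_mk, map_mul, ahom_C, ← smul_mk]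

lemma iH_smul (hd2 : 2 ≤ d) (a : ZMod 2) (y : RGH (d - 1)) :
    iH hd2 (a • y) = a • iH hd2 y := by
  obtain ⟨p, rfl⟩ := Ideal.Quotient.mk_surjective y
  rw [smul_mk, iH_mk, iH_mk, map_mul, ahom_C, ← smul_mk]

lemma pH_H1 (hd2 : 2 ≤ d) : ∀ y ∈ H1 d, pH hd2 y ∈ H1 (d - 1) := by
  intro y hy
  refine Submodule.span_induction ?_ ?_ ?_ ?_ hy
  · rintro z ⟨i, rfl⟩
    rw [gen_eq, pH_mk, pmap_X]
    by_cases h : (i : ℕ) < d - 1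
    · rw [dif_pos h]
      exact gen_mem_H1 _
    · rw [dif_neg h, RingHom.map_zero]
      exact Submodule.zero_mem _
  · rw [RingHom.map_zero]; exact Submodule.zero_mem _
  · intro a b _ _ ha hb
    rw [RingHom.map_add]; exact Submodule.add_mem _ ha hb
  · intro a z _ hz
    rw [pH_smul]
    exact Submodule.smul_mem _ _ hz

lemma iH_H1 (hd2 : 2 ≤ d) : ∀ y ∈ H1 (d - 1), iH hd2 y ∈ H1 d := by
  intro y hy
  refine Submodule.span_induction ?_ ?_ ?_ ?_ hy
  · rintro z ⟨k, rfl⟩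
    rw [gen_eq, iH_mk, imap_X]
    exact gen_mem_H1 _
  · rw [RingHom.map_zero]; exact Submodule.zero_mem _
  · intro a b _ _ ha hb
    rw [RingHom.map_add]; exact Submodule.add_mem _ ha hb
  · intro a z _ hz
    rw [iH_smul]
    exact Submodule.smul_mem _ _ hz

lemma pull_mem (hd2 : 2 ≤ d) {J : Ideal (RGH d)} (hlst : gen d (lstF d) ∈ J)
    {z : RGH d} (hz : pH hd2 z ∈ Ideal.map (pH hd2) J) : z ∈ J := by
  obtain ⟨u, hu, hud⟩ := (Ideal.mem_map_iff_of_surjective _ (pH_surj hd2)).mp hz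
  have h1 : pH hd2 (z - u) = 0 := by rw [RingHom.map_sub, hud, sub_self]
  have h2 : z - u ∈ Ideal.span {gen d (lstF d)} := pH_ker hd2 h1
  have h3 : z - u ∈ J := by
    refine Ideal.span_le.mpr ?_ h2
    rw [Set.singleton_subset_iff]
    exact hlst
  have : z = u + (z - u) := by ring
  rw [this]
  exact Submodule.add_mem _ hu h3

lemma quotient_step (hd2 : 2 ≤ d) (IH : ClaimP (d - 1)) {S : Set (RGH d)}
    (hS : S ⊆ (H1 d : Set (RGH d))) (hlstS : gen d (lstF d) ∈ S) {x : RGH d}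
    (hx : x ∈ H1 d) (hxI : x ∉ Ideal.span S) {h : RGH d} (hhx : h * x ∈ Ideal.span S) :
    h ∈ Ideal.span (L0 d S x) := by
  set F := pH hd2 with hF
  have hmapspan : Ideal.span (F '' S) = Ideal.map F (Ideal.span S) :=
    (Ideal.map_span F S).symm
  have hS' : F '' S ⊆ (H1 (d - 1) : Set (RGH (d - 1))) := by
    rintro z ⟨y, hy, rfl⟩
    exact pH_H1 hd2 y (hS hy)
  have hx' : F x ∈ H1 (d - 1) := pH_H1 hd2 x hx
  have hxI' : F x ∉ Ideal.span (F '' S) := by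
    intro hmem
    rw [hmapspan] at hmem
    exact hxI (pull_mem hd2 (Ideal.subset_span hlstS) hmem)
  have hhx' : F h * F x ∈ Ideal.span (F '' S) := by
    rw [hmapspan, ← RingHom.map_mul]
    exact Ideal.mem_map_of_mem _ hhx
  have hmain := IH (F '' S) hS' (F x) hx' hxI' (F h) hhx'
  have hsub : L0 (d - 1) (F '' S) (F x) ⊆ F '' (L0 d S x) := by
    rintro y ⟨hyH1, hyx⟩
    refine ⟨iH hd2 y, ⟨iH_H1 hd2 y hyH1, ?_⟩, pH_iH hd2 y⟩
    have hxz : F (x * iH hd2 y) ∈ Ideal.map F (Ideal.span S) := by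
      rw [RingHom.map_mul, pH_iH, ← hmapspan]
      exact hyx
    exact pull_mem hd2 (Ideal.subset_span hlstS) hxz
  have h1 : F h ∈ Ideal.span (F '' (L0 d S x)) := Ideal.span_mono hsub hmain
  rw [← Ideal.map_span] at h1
  refine pull_mem hd2 ?_ h1
  exact Ideal.subset_span (S_sub_L0 hS x hlstS)

end withInstance
end quot


/-! ### Part 5d : main induction -/

lemma zmod2_cases : ∀ z : ZMod 2, z = 0 ∨ z = 1 := by decide

lemma wlin_deg0 {c : Fin d → ZMod 2} (hc : ∀ i, i ≠ 0 → c i = 0) :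
    wlin c = C (c 0) * X 0 := by
  rw [wlin, ← Finset.add_sum_erase _ _ (Finset.mem_univ 0), Finset.sum_eq_zero, add_zero]
  intro i hi
  rw [hc i (Finset.mem_erase.mp hi).1, map_zero, zero_mul]

lemma exists_j {c : Fin d → ZMod 2} {v : RGH d} (hv : v = mkh d (wlin c))
    (h0 : v ≠ 0) (ht : v ≠ gen d 0) : ∃ j, j ≠ 0 ∧ c j = 1 := by
  by_contra hno
  push_neg at hno
  have hc : ∀ i, i ≠ 0 → c i = 0 := by
    intro i hi
    rcases zmod2_cases (c i) with h | h
    · exact h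
    · exact absurd h (hno i hi)
  rcases zmod2_cases (c 0) with h | h
  · apply h0
    rw [hv, wlin_deg0 hc, h, map_zero, zero_mul, map_zero]
  · apply ht
    rw [hv, wlin_deg0 hc, h, map_one, one_mul]
    rfl

theorem claimP_all : ∀ (d : ℕ) [NeZero d], ClaimP d := by
  intro d
  induction d using Nat.strong_induction_on with
  | _ d IHd =>
    intro hdNZ
    intro S hS x hx hxI h hhx
    by_cases hcase : ∃ v ∈ S, v ≠ 0 ∧ v ≠ gen d 0
    · -- Case 2 : some generator other than 0, t
      obtain ⟨v, hvS, hv0, hvt⟩ := hcase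
      obtain ⟨c, hvrep⟩ := H1_rep (hS hvS)
      obtain ⟨j, hj0, hcj⟩ := exists_j hvrep hv0 hvt
      have hd2 : 2 ≤ d := by
        by_contra hlt
        have hd1 : d = 1 := by have := NeZero.ne d; omega
        apply hj0
        subst hd1
        exact Subsingleton.elim j 0
      haveI : NeZero (d - 1) := ⟨by omega⟩
      set F1 : RGH d →+* RGH d := liftEndo (tauP c j) (tauP_gens hj0) with hF1
      have hinv1 : ∀ y, F1 (F1 y) = y := by
        intro y
        obtain ⟨p, rfl⟩ := Ideal.Quotient.mk_surjective y
        rw [hF1, liftEndo_mk, liftEndo_mk, tauP_invol hcj]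
      have hH11 : ∀ y ∈ H1 d, F1 y ∈ H1 d := by
        refine liftEndo_H1 _ _ fun i => ?_
        rw [tauP_X]
        by_cases hij : i = j
        · rw [if_pos hij]; exact mk_wlin_mem c
        · rw [if_neg hij]; exact gen_mem_H1 i
      have hF1v : F1 v = gen d j := by
        rw [hvrep, hF1, liftEndo_mk, tauP_wlin hcj]; rfl
      have hlst0 : lstF d ≠ 0 := by
        intro hcontra
        have h1 := congrArg Fin.val hcontra
        simp only [lstF, Fin.val_zero] at h1
        omega
      set F2 : RGH d →+* RGH d := liftEndo (swP j (lstF d)) (swP_gens hj0 hlst0) with hF2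
      have hinv2 : ∀ y, F2 (F2 y) = y := by
        intro y
        obtain ⟨p, rfl⟩ := Ideal.Quotient.mk_surjective y
        rw [hF2, liftEndo_mk, liftEndo_mk, swP_invol]
      have hH12 : ∀ y ∈ H1 d, F2 y ∈ H1 d := by
        refine liftEndo_H1 _ _ fun i => ?_
        rw [swP_X]
        exact gen_mem_H1 _
      have hF2gj : F2 (gen d j) = gen d (lstF d) := by
        rw [gen_eq, hF2, liftEndo_mk, swP_X, Equiv.swap_apply_left]; rfl
      refine transport_step F1 hinv1 hH11 hS ?_
      have hS1 : F1 '' S ⊆ (H1 d : Set (RGH d)) := by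
        rintro z ⟨y, hy, rfl⟩
        exact hH11 y (hS hy)
      refine transport_step F2 hinv2 hH12 hS1 ?_
      have hS2 : F2 '' (F1 '' S) ⊆ (H1 d : Set (RGH d)) := by
        rintro z ⟨y, hy, rfl⟩
        exact hH12 y (hS1 hy)
      have hlstS2 : gen d (lstF d) ∈ F2 '' (F1 '' S) := by
        have heq : F2 (F1 v) = gen d (lstF d) := by rw [hF1v, hF2gj]
        rw [← heq]
        exact Set.mem_image_of_mem F2 (Set.mem_image_of_mem F1 hvS)
      exact quotient_step hd2 (IHd (d - 1) (by omega)) hS2 hlstS2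
        (hH12 _ (hH11 x hx))
        (transport_notmem F2 hinv2 (transport_notmem F1 hinv1 hxI))
        (transport_mul F2 (transport_mul F1 hhx))
    · -- Case 1 : S ⊆ {0, t}
      have hS01 : ∀ v ∈ S, v = 0 ∨ v = gen d 0 := by
        intro v hv
        rcases eq_or_ne v 0 with h | h
        · exact Or.inl h
        · rcases eq_or_ne v (gen d 0) with h' | h'
          · exact Or.inr h'
          · exact absurd ⟨v, hv, h, h'⟩ hcase
      obtain ⟨cx, hxrep⟩ := H1_rep hx
      have hx0 : x ≠ 0 := fun hc => hxI (hc ▸ Submodule.zero_mem _)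
      by_cases ht : gen d 0 ∈ S
      · -- span S = (t)
        have hspan : Ideal.span S = Ideal.span {gen d 0} := by
          apply le_antisymm
          · rw [Ideal.span_le]
            intro w hw
            rcases hS01 w hw with rfl | rfl
            · exact Submodule.zero_mem _
            · exact Ideal.subset_span rfl
          · rw [Ideal.span_le, Set.singleton_subset_iff]
            exact Ideal.subset_span ht
        have hxt : x ≠ gen d 0 := by
          intro hc
          exact hxI (hspan ▸ hc ▸ Ideal.subset_span rfl)
        obtain ⟨j, hj0, hcj⟩ := exists_j hxrep hx0 hxt
        set F : RGH d →+* RGH d := liftEndo (tauP cx j) (tauP_gens hj0) with hF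
        have hinv : ∀ y, F (F y) = y := by
          intro y
          obtain ⟨p, rfl⟩ := Ideal.Quotient.mk_surjective y
          rw [hF, liftEndo_mk, liftEndo_mk, tauP_invol hcj]
        have hH1F : ∀ y ∈ H1 d, F y ∈ H1 d := by
          refine liftEndo_H1 _ _ fun i => ?_
          rw [tauP_X]
          by_cases hij : i = j
          · rw [if_pos hij]; exact mk_wlin_mem cx
          · rw [if_neg hij]; exact gen_mem_H1 i
        refine transport_step F hinv hH1F hS ?_
        have hFx : F x = gen d j := by
          rw [hxrep, hF, liftEndo_mk, tauP_wlin hcj]; rfl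
        have hFt : F (gen d 0) = gen d 0 := by
          rw [gen_eq, hF, liftEndo_mk, tauP_X,
            if_neg (show ¬ (0:Fin d) = j from fun hz => hj0 hz.symm)]
        have hspan' : Ideal.span (F '' S) = Ideal.span {gen d 0} := by
          rw [← Ideal.map_span, hspan, Ideal.map_span, Set.image_singleton, hFt]
        have hBH : F h * gen d j ∈ Ideal.span {gen d 0} := by
          have h1 := transport_mul F hhx
          rwa [hFx, hspan'] at h1
        have hmem := BH hj0 hBH
        refine Ideal.span_mono ?_ hmem
        rintro z (rfl | rfl)
        · refine ⟨gen_mem_H1 0, ?_⟩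
          rw [hspan']
          exact Ideal.mul_mem_left _ _ (Ideal.subset_span rfl)
        · refine ⟨gen_mem_H1 j, ?_⟩
          rw [hspan', hFx, sq_eq (gen_mem_H1 j)]
          exact Ideal.mul_mem_right _ _ (Ideal.subset_span rfl)
      · -- span S = ⊥
        have hbot : Ideal.span S = ⊥ := by
          rw [Ideal.span_eq_bot]
          intro v hv
          rcases hS01 v hv with h | h
          · exact h
          · exact absurd (h ▸ hv) ht
        have hhx0 : h * x = 0 := by
          rw [hbot] at hhx
          exact (Ideal.mem_bot).mp hhx
        by_cases hxt : x = gen d 0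
        · have h0 : h * gen d 0 = 0 := hxt ▸ hhx0
          have hmem := A0H h0
          refine Ideal.span_mono ?_ hmem
          rintro z rfl
          refine ⟨gen_mem_H1 0, ?_⟩
          have hzero : x * gen d 0 = 0 := by
            rw [hxt, gen_eq, ← map_mul]
            rw [Ideal.Quotient.eq_zero_iff_mem]
            have hX : (X 0 * X 0 : Pd d) = X 0 ^ 2 := by ring
            rw [hX]
            exact Ideal.subset_span (Or.inl rfl)
          rw [hzero]
          exact Submodule.zero_mem _
        · obtain ⟨j, hj0, hcj⟩ := exists_j hxrep hx0 hxt
          set F : RGH d →+* RGH d := liftEndo (tauP cx j) (tauP_gens hj0) with hF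
          have hinv : ∀ y, F (F y) = y := by
            intro y
            obtain ⟨p, rfl⟩ := Ideal.Quotient.mk_surjective y
            rw [hF, liftEndo_mk, liftEndo_mk, tauP_invol hcj]
          have hH1F : ∀ y ∈ H1 d, F y ∈ H1 d := by
            refine liftEndo_H1 _ _ fun i => ?_
            rw [tauP_X]
            by_cases hij : i = j
            · rw [if_pos hij]; exact mk_wlin_mem cx
            · rw [if_neg hij]; exact gen_mem_H1 i
          refine transport_step F hinv hH1F hS ?_
          have hFx : F x = gen d j := by
            rw [hxrep, hF, liftEndo_mk, tauP_wlin hcj]; rfl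
          have hAHin : F h * gen d j = 0 := by
            rw [← hFx, ← RingHom.map_mul, hhx0, RingHom.map_zero]
          have hmem := AH hj0 hAHin
          refine Ideal.span_mono ?_ hmem
          rintro z rfl
          refine ⟨Submodule.add_mem _ (gen_mem_H1 0) (gen_mem_H1 j), ?_⟩
          have hzero : F x * (gen d 0 + gen d j) = 0 := by
            rw [hFx, mul_add, sq_eq (gen_mem_H1 j), mul_comm (gen d j) (gen d 0),
              add_self_H]
          rw [hzero]
          exact Submodule.zero_mem _

end UK

set_option synthInstance.maxHeartbeats 1000000 in
set_option maxHeartbeats 1000000 in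
/-- For `d ≥ 2`, the algebra `H = F₂[T, X₂, …, X_d]/(T², X_i² − T·X_i)`
is universally Koszul: for every ideal `I` generated by a subset of `H_1` and every
`x ∈ H_1 \ I`, the colon ideal `I : x` is again generated by a subset of `H_1`. -/
theorem stmt15 (d : ℕ) [NeZero d] (hd : 2 ≤ d) :
    ∀ I : Ideal (RGH d), (∃ S ⊆ ((H1 d : Submodule (ZMod 2) (RGH d)) : Set (RGH d)),
        I = Ideal.span S) →
      ∀ x ∈ H1 d, x ∉ I →
        ∃ S' ⊆ ((H1 d : Submodule (ZMod 2) (RGH d)) : Set (RGH d)),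
          colonIdeal I x = Ideal.span S' := by
  intro I hI x hxH1 hxI
  obtain ⟨S, hSsub, rfl⟩ := hI
  refine ⟨L0 d S x, fun y hy => hy.1, ?_⟩
  apply le_antisymm
  · intro z hz
    have hz' : z * x ∈ Ideal.span S := by
      have h1 := Submodule.mem_comap.mp hz
      rwa [LinearMap.toSpanSingleton_apply, smul_eq_mul] at h1
    exact claimP_all d S hSsub x hxH1 hxI z hz'
  · rw [Ideal.span_le]
    rintro y ⟨hyH1, hyx⟩
    rw [SetLike.mem_coe]
    refine Submodule.mem_comap.mpr ?_
    rw [LinearMap.toSpanSingleton_apply, smul_eq_mul, mul_comm]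
    exact hyx
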